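/- arXiv:1911.10017 — 3 statements merged into one kernel-verified Lean document; each statement's English description precedes it below -/
import Mathlib

section
/- For any complex number z and real α, (1/(2π)) ∫₀^{2π} |ρ(Re(e^{iα} z))|² dα = |z|²/4, where ρ(a) = max(a,0). -/
open Real Complex

/-!
Writing `z = ‖z‖ e^{i arg z}`, the integrand is `ρ(‖z‖ cos(α + arg z))²`. Shifting `α` by the
half period `π` flips the sign of the cosine, and `ρ(a)² + ρ(-a)² = a²`, so twice the integral
is `‖z‖² ∫₀^{2π} cos² = π ‖z‖²`.
-/

theorem Function.Periodic.intervalIntegral_comp_add_right {E : Type*} [NormedAddCommGroup E]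
    [NormedSpace ℝ E] {f : ℝ → E} {T : ℝ} (hf : Function.Periodic f T) (t s : ℝ) :
    ∫ x in t..t + T, f (x + s) = ∫ x in t..t + T, f x := by
  rw [intervalIntegral.integral_comp_add_right, add_right_comm, hf.intervalIntegral_add_eq]

theorem max_zero_sq_add_max_neg_zero_sq (a : ℝ) : max a 0 ^ 2 + max (-a) 0 ^ 2 = a ^ 2 := by
  rcases le_total 0 a with ha | ha <;> simp [ha]

theorem Complex.re_exp_ofReal_mul_I_mul (α : ℝ) (z : ℂ) :
    (exp (α * I) * z).re = ‖z‖ * Real.cos (α + arg z) := by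
  rw [mul_re, exp_ofReal_mul_I_re, exp_ofReal_mul_I_im, ← norm_mul_cos_arg, ← norm_mul_sin_arg,
    Real.cos_add]
  ring

theorem integral_cos_sq_zero_two_pi : ∫ x in (0 : ℝ)..2 * π, Real.cos x ^ 2 = π := by
  simp [integral_cos_sq]

theorem integral_max_mul_cos_add_zero_sq (r θ : ℝ) :
    ∫ α in (0 : ℝ)..2 * π, max (r * Real.cos (α + θ)) 0 ^ 2 = π * r ^ 2 / 2 := by
  set g : ℝ → ℝ := fun α ↦ max (r * Real.cos (α + θ)) 0 ^ 2 with hg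
  have hg_cont : Continuous g := by fun_prop
  have hg_periodic : Function.Periodic g (2 * π) := fun α ↦ by
    simp only [hg, add_right_comm α, Real.cos_add_two_pi]
  have hg_add_pi (α : ℝ) : g α + g (α + π) = r ^ 2 * Real.cos (α + θ) ^ 2 := by
    simp only [hg, add_right_comm α, Real.cos_add_pi, mul_neg, max_zero_sq_add_max_neg_zero_sq]
    ring
  have h_cos_sq : ∫ α in (0 : ℝ)..2 * π, Real.cos (α + θ) ^ 2 = π := by
    have h_periodic : Function.Periodic (fun x ↦ Real.cos x ^ 2) (2 * π) :=
      Real.cos_periodic.comp (· ^ 2)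
    simpa [integral_cos_sq_zero_two_pi] using h_periodic.intervalIntegral_comp_add_right 0 θ
  have h_shift := hg_periodic.intervalIntegral_comp_add_right 0 π
  rw [zero_add] at h_shift
  calc ∫ α in (0 : ℝ)..2 * π, g α
      = (∫ α in (0 : ℝ)..2 * π, (g α + g (α + π))) / 2 := by
        rw [intervalIntegral.integral_add (hg_cont.intervalIntegrable _ _)
          ((by fun_prop : Continuous fun α ↦ g (α + π)).intervalIntegrable _ _), h_shift]
        ring
    _ = π * r ^ 2 / 2 := by
        simp only [hg_add_pi, intervalIntegral.integral_const_mul, h_cos_sq]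
        ring

theorem rectifier_phase_energy (z : ℂ) :
    (1 / (2 * π)) * ∫ α in (0 : ℝ)..(2 * π),
        |max ((Complex.exp (α * Complex.I) * z).re) 0| ^ 2
      = ‖z‖ ^ 2 / 4 := by
  simp only [sq_abs, re_exp_ofReal_mul_I_mul, integral_max_mul_cos_add_zero_sq]
  field_simp
  ring
end

section
/- The phase harmonic map z ↦ [z]^k, where [z]^k = |z| e^{i k φ(z)} with φ(z) the argument of z (and [0]^k = 0), is Lipschitz on ℂ with constant max(|k|, 1): for all complex z, z', |[z]^k - [z']^k| ≤ max(|k|,1) |z - z'|. -/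
/-!
Write `z = r u` and `z' = s v` with `r, s ≥ 0` and `|u| = |v| = 1`, so that `[z]^k = r u^k`.
For unit vectors `|r u - s v|² = (r - s)² + r s |u - v|²`, hence the bound reduces to
`|u^k - v^k| ≤ |k| |u - v|` on the unit circle, which follows from the telescoping
`u^(n+1) - v^(n+1) = u^n (u - v) + (u^n - v^n) v`, and for negative `k` from `|a⁻¹ - b⁻¹| = |a - b|`.
-/

open Complex

/-- The phase harmonic `[z]^k = |z| e^{i k φ(z)}`, with `[0]^k = 0`
    (automatic since `arg 0 = 0` and `|0| = 0`). -/
noncomputable def phaseHarmonic (k : ℤ) (z : ℂ) : ℂ :=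
  (‖z‖ : ℂ) * Complex.exp ((k : ℂ) * (Complex.arg z : ℂ) * Complex.I)

section InnerProductSpace

variable {E : Type*} [NormedAddCommGroup E] [InnerProductSpace ℝ E]

theorem norm_smul_sub_smul_sq_of_norm_eq_one {u v : E} (hu : ‖u‖ = 1) (hv : ‖v‖ = 1) (r s : ℝ) :
    ‖r • u - s • v‖ ^ 2 = (r - s) ^ 2 + r * s * ‖u - v‖ ^ 2 := by
  rw [norm_sub_sq_real, norm_sub_sq_real, norm_smul, norm_smul, real_inner_smul_left,
    real_inner_smul_right, hu, hv, Real.norm_eq_abs, Real.norm_eq_abs]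
  nlinarith [sq_abs r, sq_abs s]

/-- Extending a map of the unit sphere radially, `r • u ↦ r • f u`, keeps a Lipschitz constant
`M ≥ 1`. -/
theorem norm_smul_sub_smul_le_of_norm_sub_le {u v u' v' : E} (hu : ‖u‖ = 1) (hv : ‖v‖ = 1)
    (hu' : ‖u'‖ = 1) (hv' : ‖v'‖ = 1) {M : ℝ} (hM : 1 ≤ M) (h : ‖u' - v'‖ ≤ M * ‖u - v‖)
    {r s : ℝ} (hr : 0 ≤ r) (hs : 0 ≤ s) :
    ‖r • u' - s • v'‖ ≤ M * ‖r • u - s • v‖ := by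
  have hM0 : 0 ≤ M := zero_le_one.trans hM
  refine (pow_le_pow_iff_left₀ (norm_nonneg _) (by positivity) two_ne_zero).mp ?_
  have h2 : ‖u' - v'‖ ^ 2 ≤ M ^ 2 * ‖u - v‖ ^ 2 := by
    rw [← mul_pow]; exact pow_le_pow_left₀ (norm_nonneg _) h 2
  have hM2 : 1 ≤ M ^ 2 := one_le_pow₀ hM
  rw [mul_pow, norm_smul_sub_smul_sq_of_norm_eq_one hu' hv', norm_smul_sub_smul_sq_of_norm_eq_one hu hv]
  nlinarith [mul_le_mul_of_nonneg_left h2 (mul_nonneg hr hs), sq_nonneg (r - s),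
    mul_nonneg (mul_nonneg hr hs) (sq_nonneg ‖u - v‖)]

end InnerProductSpace

theorem norm_pow_sub_pow_le {R : Type*} [SeminormedRing R] [NormOneClass R] {u v : R}
    (hu : ‖u‖ ≤ 1) (hv : ‖v‖ ≤ 1) (n : ℕ) : ‖u ^ n - v ^ n‖ ≤ n * ‖u - v‖ := by
  induction n with
  | zero => simp
  | succ n ih =>
    calc ‖u ^ (n + 1) - v ^ (n + 1)‖ = ‖u ^ n * (u - v) + (u ^ n - v ^ n) * v‖ := by
          congr 1; noncomm_ring
      _ ≤ ‖u‖ ^ n * ‖u - v‖ + ‖u ^ n - v ^ n‖ * ‖v‖ := by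
          refine (norm_add_le _ _).trans (add_le_add ?_ (norm_mul_le _ _))
          exact (norm_mul_le _ _).trans (mul_le_mul_of_nonneg_right (norm_pow_le _ _) (norm_nonneg _))
      _ ≤ 1 * ‖u - v‖ + n * ‖u - v‖ * 1 := by
          gcongr
          exact pow_le_one₀ (norm_nonneg _) hu
      _ = (n + 1 : ℕ) * ‖u - v‖ := by push_cast; ring

theorem norm_zpow_sub_zpow_le {K : Type*} [NormedDivisionRing K] {u v : K}
    (hu : ‖u‖ = 1) (hv : ‖v‖ = 1) (k : ℤ) : ‖u ^ k - v ^ k‖ ≤ |(k : ℝ)| * ‖u - v‖ := by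
  obtain ⟨n, rfl | rfl⟩ := k.eq_nat_or_neg
  · simpa using norm_pow_sub_pow_le hu.le hv.le n
  · have hun : u ^ n ≠ 0 := pow_ne_zero _ (norm_ne_zero_iff.mp (by simp [hu]))
    have hvn : v ^ n ≠ 0 := pow_ne_zero _ (norm_ne_zero_iff.mp (by simp [hv]))
    rw [zpow_neg, zpow_neg, zpow_natCast, zpow_natCast, ← dist_eq_norm, dist_inv_inv₀ hun hvn]
    simpa [hu, hv, dist_eq_norm] using norm_pow_sub_pow_le hu.le hv.le n

theorem phaseHarmonic_eq_norm_mul_zpow (k : ℤ) (z : ℂ) :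
    phaseHarmonic k z = ‖z‖ * exp (arg z * I) ^ k := by
  rw [phaseHarmonic, mul_assoc, exp_int_mul]

theorem phaseHarmonic_lipschitz (k : ℤ) (z z' : ℂ) :
    ‖phaseHarmonic k z - phaseHarmonic k z'‖ ≤
      max (|k| : ℝ) 1 * ‖z - z'‖ := by
  have hu := norm_exp_ofReal_mul_I (arg z)
  have hv := norm_exp_ofReal_mul_I (arg z')
  have hLip : ‖exp (arg z * I) ^ k - exp (arg z' * I) ^ k‖
      ≤ max (|k| : ℝ) 1 * ‖exp (arg z * I) - exp (arg z' * I)‖ :=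
    (norm_zpow_sub_zpow_le hu hv k).trans (by gcongr; exact le_max_left _ _)
  have hradial := norm_smul_sub_smul_le_of_norm_sub_le hu hv (by simp [hu]) (by simp [hv])
    (le_max_right _ _) hLip (norm_nonneg z) (norm_nonneg z')
  simpa only [phaseHarmonic_eq_norm_mul_zpow, real_smul, norm_mul_exp_arg_mul_I] using hradial
end

section
/- Let R : ℝ^d → ℂ^n be a map satisfying the bi-Lipschitz bounds A‖x - x'‖² ≤ ‖R(x) - R(x')‖² ≤ B‖x - x'‖² for all x, x'. Then for any square-integrable random vector X in ℝ^d, A·σ²(X) ≤ σ²(R(X)) ≤ B·σ²(X), where σ²(Z) = E[‖Z - E(Z)‖²]. -/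
/-!
Both variances are half the mean squared distance between two independent copies of the
random vector: `∫∫ ‖Z ω - Z ω'‖² = 2 σ²(Z)`, which follows by integrating the parallel axis
identity `∫ ‖c - Z‖² = ‖c - E Z‖² + σ²(Z)` over `c = Z ω`. The bi-Lipschitz bounds compare the
integrands pointwise, and the upper bound also makes `R ∘ X` square integrable.
-/

open MeasureTheory

/-- `σ²(Z) = E[‖Z − E Z‖²]`, the trace of the covariance of `Z`. -/
noncomputable def varVec {Ω : Type*} [MeasurableSpace Ω] (μ : Measure Ω)
    {E : Type*} [NormedAddCommGroup E] [NormedSpace ℝ E] (Z : Ω → E) : ℝ :=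
  ∫ ω, ‖Z ω - ∫ ω', Z ω' ∂μ‖ ^ 2 ∂μ

theorem lipschitzWith_of_norm_sub_sq_le {E F : Type*} [SeminormedAddCommGroup E]
    [SeminormedAddCommGroup F] {f : E → F} {B : ℝ}
    (h : ∀ x y, ‖f x - f y‖ ^ 2 ≤ B * ‖x - y‖ ^ 2) :
    LipschitzWith (Real.toNNReal √B) f :=
  LipschitzWith.of_dist_le_mul fun x y => by
    rw [dist_eq_norm, dist_eq_norm, Real.coe_toNNReal _ (Real.sqrt_nonneg B)]
    calc ‖f x - f y‖ ≤ √(B * ‖x - y‖ ^ 2) := Real.le_sqrt_of_sq_le (h x y)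
      _ = √B * ‖x - y‖ := by rw [Real.sqrt_mul' _ (sq_nonneg _), Real.sqrt_sq (norm_nonneg _)]

theorem LipschitzWith.comp_memLp_of_isFiniteMeasure {α E F : Type*} [MeasurableSpace α]
    {μ : Measure α} [IsFiniteMeasure μ] [NormedAddCommGroup E] [NormedAddCommGroup F]
    {p : ENNReal} {K : NNReal} {g : E → F} (hg : LipschitzWith K g) {f : α → E}
    (hf : MemLp f p μ) : MemLp (g ∘ f) p μ := by
  have hg₀ : LipschitzWith K fun x => g x - g 0 :=
    LipschitzWith.of_dist_le_mul fun x y => by simpa [dist_sub_right] using hg.dist_le_mul x y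
  convert (hg₀.comp_memLp (sub_self _) hf).add (memLp_const (g 0)) using 1
  funext x
  simp

section PairedVariance

variable {Ω : Type*} [MeasurableSpace Ω] {μ : Measure Ω} [IsProbabilityMeasure μ]
  {E : Type*} [NormedAddCommGroup E] {Z : Ω → E}

theorem integrable_norm_sub_sq_prod (hZ : MemLp Z 2 μ) :
    Integrable (fun p : Ω × Ω => ‖Z p.1 - Z p.2‖ ^ 2) (μ.prod μ) :=
  ((hZ.comp_measurePreserving measurePreserving_fst).sub
    (hZ.comp_measurePreserving measurePreserving_snd)).integrable_norm_pow two_ne_zero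

variable [InnerProductSpace ℝ E] [CompleteSpace E]

open scoped RealInnerProductSpace

theorem integral_norm_sub_sq_eq_add_varVec (hZ : MemLp Z 2 μ) (c : E) :
    ∫ ω, ‖c - Z ω‖ ^ 2 ∂μ = ‖c - ∫ ω, Z ω ∂μ‖ ^ 2 + varVec μ Z := by
  set m := ∫ ω, Z ω ∂μ
  have hW : MemLp (fun ω => Z ω - m) 2 μ := hZ.sub (memLp_const m)
  have hW_int : Integrable (fun ω => Z ω - m) μ := hW.integrable one_le_two
  have hW_mean : ∫ ω, (Z ω - m) ∂μ = 0 := by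
    rw [integral_sub (hZ.integrable one_le_two) (integrable_const m)]
    simp [m]
  have hcross : ∫ ω, ⟪c - m, Z ω - m⟫ ∂μ = 0 := by
    rw [integral_inner hW_int, hW_mean, inner_zero_right]
  have hexpand : ∀ ω, ‖c - Z ω‖ ^ 2 = ‖c - m‖ ^ 2 - 2 * ⟪c - m, Z ω - m⟫ + ‖Z ω - m‖ ^ 2 := by
    intro ω
    rw [← norm_sub_sq_real, sub_sub_sub_cancel_right]
  have hcross_int : Integrable (fun ω => 2 * ⟪c - m, Z ω - m⟫) μ :=
    (hW_int.const_inner _).const_mul 2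
  have hsq_int : Integrable (fun ω => ‖Z ω - m‖ ^ 2) μ := hW.integrable_norm_pow two_ne_zero
  simp_rw [hexpand]
  rw [integral_add ((integrable_const _).sub' hcross_int) hsq_int,
    integral_sub (integrable_const _) hcross_int, integral_const_mul, hcross]
  simp [varVec, m]

theorem integral_norm_sub_sq_prod (hZ : MemLp Z 2 μ) :
    ∫ p : Ω × Ω, ‖Z p.1 - Z p.2‖ ^ 2 ∂(μ.prod μ) = 2 * varVec μ Z := by
  rw [integral_prod _ (integrable_norm_sub_sq_prod hZ)]
  simp_rw [integral_norm_sub_sq_eq_add_varVec hZ]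
  have hsq_int : Integrable (fun ω => ‖Z ω - ∫ ω', Z ω' ∂μ‖ ^ 2) μ :=
    (hZ.sub (memLp_const _)).integrable_norm_pow two_ne_zero
  rw [integral_add hsq_int (integrable_const _)]
  simp [varVec, two_mul]

theorem mul_varVec_le_mul_varVec {F : Type*} [NormedAddCommGroup F] [InnerProductSpace ℝ F]
    [CompleteSpace F] {W : Ω → F} (hZ : MemLp Z 2 μ) (hW : MemLp W 2 μ) {a b : ℝ}
    (h : ∀ ω ω', a * ‖Z ω - Z ω'‖ ^ 2 ≤ b * ‖W ω - W ω'‖ ^ 2) :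
    a * varVec μ Z ≤ b * varVec μ W := by
  have := integral_mono ((integrable_norm_sub_sq_prod hZ).const_mul a)
    ((integrable_norm_sub_sq_prod hW).const_mul b) fun p => h p.1 p.2
  rw [integral_const_mul, integral_const_mul, integral_norm_sub_sq_prod hZ,
    integral_norm_sub_sq_prod hW] at this
  linarith

end PairedVariance

theorem biLipschitz_variance_bounds_general {d n : ℕ}
    {Ω : Type*} [MeasurableSpace Ω] (μ : Measure Ω) [IsProbabilityMeasure μ]
    (R : EuclideanSpace ℝ (Fin d) → EuclideanSpace ℂ (Fin n))
    (A B : ℝ)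
    (hbl : ∀ x x' : EuclideanSpace ℝ (Fin d),
      A * ‖x - x'‖ ^ 2 ≤ ‖R x - R x'‖ ^ 2 ∧ ‖R x - R x'‖ ^ 2 ≤ B * ‖x - x'‖ ^ 2)
    (X : Ω → EuclideanSpace ℝ (Fin d)) (hX : MemLp X 2 μ) :
    A * varVec μ X ≤ varVec μ (fun ω => R (X ω)) ∧
      varVec μ (fun ω => R (X ω)) ≤ B * varVec μ X := by
  have hRX : MemLp (fun ω => R (X ω)) 2 μ :=
    (lipschitzWith_of_norm_sub_sq_le fun x y => (hbl x y).2).comp_memLp_of_isFiniteMeasure hX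
  constructor
  · simpa using mul_varVec_le_mul_varVec (b := 1) hX hRX fun ω ω' => by
      simpa using (hbl (X ω) (X ω')).1
  · simpa using mul_varVec_le_mul_varVec (a := 1) hRX hX fun ω ω' => by
      simpa using (hbl (X ω) (X ω')).2

theorem biLipschitz_variance_bounds {d n : ℕ}
    {Ω : Type*} [MeasurableSpace Ω] (μ : Measure Ω) [IsProbabilityMeasure μ]
    (R : EuclideanSpace ℝ (Fin d) → EuclideanSpace ℂ (Fin n))
    (A B : ℝ) (hA : 0 < A) (hB : 0 < B)
    (hbl : ∀ x x' : EuclideanSpace ℝ (Fin d),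
      A * ‖x - x'‖ ^ 2 ≤ ‖R x - R x'‖ ^ 2 ∧ ‖R x - R x'‖ ^ 2 ≤ B * ‖x - x'‖ ^ 2)
    (X : Ω → EuclideanSpace ℝ (Fin d)) (hX : MemLp X 2 μ) :
    A * varVec μ X ≤ varVec μ (fun ω => R (X ω)) ∧
      varVec μ (fun ω => R (X ω)) ≤ B * varVec μ X :=
  biLipschitz_variance_bounds_general μ R A B hbl X hX
end
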